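/- arXiv:math/0206125 — 3 statements merged into one kernel-verified Lean document; each statement's English description precedes it below -/
import Mathlib

section
/- Let x, a ∈ R^{d+1} with ||x|| = ε > 0, ||a|| = 1, and suppose v := -a^T (x/||x||) satisfies 0 ≤ v < 1. Let y be the point on the line segment from x to a closest to the origin. Then ||y|| ≤ sqrt((1 - v^2)/(1 + ε^2 + 2εv)) · ε. -/
/-!
The point of the line through `x` and `a` nearest the origin has squared norm
`(‖x‖²‖a‖² - ⟪x, a⟫²) / ‖x - a‖²`. With `‖x‖ = ε`, `‖a‖ = 1` and `⟪x, a⟫ = -vε` this is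
`(1 - v²) ε² / (1 + ε² + 2εv)`, and since `⟪x, a⟫ ≤ 0` that point lies on the segment `[x, a]`,
so the nearest point `y` of the segment is at most that far from the origin.
-/

open RealInnerProductSpace

section ClosestPointOnSegment

variable {E : Type*} [NormedAddCommGroup E] [InnerProductSpace ℝ E]

lemma norm_one_sub_smul_add_smul_sq (x a : E) (t : ℝ) :
    ‖(1 - t) • x + t • a‖ ^ 2 =
      (1 - t) ^ 2 * ‖x‖ ^ 2 + 2 * (1 - t) * t * ⟪x, a⟫ + t ^ 2 * ‖a‖ ^ 2 := by
  rw [norm_add_sq_real, norm_smul, norm_smul, real_inner_smul_left, real_inner_smul_right,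
    Real.norm_eq_abs, Real.norm_eq_abs, mul_pow, mul_pow, sq_abs, sq_abs]
  ring

lemma exists_mem_segment_norm_sq_mul_norm_sub_sq {x a : E}
    (hx : ⟪x, a⟫ ≤ ‖x‖ ^ 2) (ha : ⟪x, a⟫ ≤ ‖a‖ ^ 2) :
    ∃ z ∈ segment ℝ x a, ‖z‖ ^ 2 * ‖x - a‖ ^ 2 = ‖x‖ ^ 2 * ‖a‖ ^ 2 - ⟪x, a⟫ ^ 2 := by
  rcases eq_or_ne x a with rfl | hne
  · refine ⟨x, left_mem_segment ℝ x x, ?_⟩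
    rw [real_inner_self_eq_norm_sq, sub_self, norm_zero]
    ring
  have hD : ‖x - a‖ ^ 2 = ‖x‖ ^ 2 - 2 * ⟪x, a⟫ + ‖a‖ ^ 2 := norm_sub_sq_real x a
  have hDpos : 0 < ‖x - a‖ ^ 2 := by positivity [sub_ne_zero.mpr hne]
  have ht0 : 0 ≤ (‖x‖ ^ 2 - ⟪x, a⟫) / ‖x - a‖ ^ 2 := div_nonneg (by linarith) hDpos.le
  have ht1 : (‖x‖ ^ 2 - ⟪x, a⟫) / ‖x - a‖ ^ 2 ≤ 1 := (div_le_one hDpos).mpr (by linarith)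
  refine ⟨_, ⟨_, _, sub_nonneg.mpr ht1, ht0, sub_add_cancel 1 _, rfl⟩, ?_⟩
  rw [norm_one_sub_smul_add_smul_sq]
  generalize ‖x - a‖ ^ 2 = D at hD hDpos ⊢
  field_simp
  rw [hD]
  ring

end ClosestPointOnSegment

theorem stmt5_general {d : ℕ} (x a : EuclideanSpace ℝ (Fin (d + 1))) (ε v : ℝ)
    (hx : ‖x‖ = ε) (ha : ‖a‖ = 1)
    (hv : v = -⟪a, (‖x‖)⁻¹ • x⟫) (hv0 : 0 ≤ v)
    (y : EuclideanSpace ℝ (Fin (d + 1)))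
    (hymin : ∀ z ∈ segment ℝ x a, ‖y‖ ≤ ‖z‖) :
    ‖y‖ ≤ Real.sqrt ((1 - v ^ 2) / (1 + ε ^ 2 + 2 * ε * v)) * ε := by
  have hε : 0 ≤ ε := hx ▸ norm_nonneg x
  have hxa : ⟪x, a⟫ = -(v * ε) := by
    rcases hε.eq_or_lt with rfl | hε
    · simp [norm_eq_zero.mp hx]
    rw [hv, hx, real_inner_smul_right, real_inner_comm]
    field_simp
  have hD : ‖x - a‖ ^ 2 = 1 + ε ^ 2 + 2 * ε * v := by
    rw [norm_sub_sq_real, hxa, hx, ha]; ring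
  obtain ⟨z, hz, hnorm⟩ := exists_mem_segment_norm_sq_mul_norm_sub_sq (x := x) (a := a)
    (by rw [hxa, hx]; nlinarith) (by rw [hxa, ha]; nlinarith)
  have hDpos : 0 < 1 + ε ^ 2 + 2 * ε * v := by positivity
  rw [hD, hx, ha, hxa] at hnorm
  have hz_sq : ‖z‖ ^ 2 = (1 - v ^ 2) / (1 + ε ^ 2 + 2 * ε * v) * ε ^ 2 := by
    field_simp
    linear_combination hnorm
  calc ‖y‖ ≤ ‖z‖ := hymin z hz
    _ = Real.sqrt (‖z‖ ^ 2) := (Real.sqrt_sq (norm_nonneg z)).symm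
    _ = Real.sqrt ((1 - v ^ 2) / (1 + ε ^ 2 + 2 * ε * v)) * ε := by
      rw [hz_sq, Real.sqrt_mul' _ (sq_nonneg ε), Real.sqrt_sq hε]

/-- quantitative progress estimate (5).  With `‖x‖ = ε > 0`, `‖a‖ = 1`,
violation `v = -⟪a, x/‖x‖⟫ ∈ [0, 1)`, the point `y` of the segment `[x, a]` closest to
the origin satisfies `‖y‖ ≤ √((1 - v²)/(1 + ε² + 2εv)) · ε`. -/
theorem stmt5 {d : ℕ} (x a : EuclideanSpace ℝ (Fin (d + 1))) (ε v : ℝ)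
    (hε : 0 < ε) (hx : ‖x‖ = ε) (ha : ‖a‖ = 1)
    (hv : v = -⟪a, (‖x‖)⁻¹ • x⟫) (hv0 : 0 ≤ v) (hv1 : v < 1)
    (y : EuclideanSpace ℝ (Fin (d + 1)))
    (hyseg : y ∈ segment ℝ x a)
    (hymin : ∀ z ∈ segment ℝ x a, ‖y‖ ≤ ‖z‖) :
    ‖y‖ ≤ Real.sqrt ((1 - v ^ 2) / (1 + ε ^ 2 + 2 * ε * v)) * ε :=
  stmt5_general x a ε v hx ha hv hv0 y hymin
end

section
/- Let Q = co{a_1, ..., a_{d+1}} ⊂ S^d be a regular spherical simplex with circumradius R' and vertex diameter D_v. Then cos D_v = ((d+1) cos^2 R' - 1) / sqrt(1 + (d-1)(d+1) cos^2 R'). -/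
open RealInnerProductSpace
open scoped BigOperators

/-! Let `m = ⟪a j, ∑ i, a i⟫ = 1 + d t` be the common inner product of a vertex with the vertex
sum `S`. The vector `cos R' • S - m • C` lies in the span of the vertices and is orthogonal to
each of them, hence vanishes; pairing it with `C` gives `m = (d + 1) cos² R'`. The facet sum
`b = ∑_{i ≠ 0} a i` is the vertex sum of a regular family of `d` unit vectors, so
`⟪a 0, b⟫ = d t` and `‖b‖² = d (1 + (d - 1) t)`, and both are now expressed through `cos R'`. -/

open Finset

section RegularFamily

variable {E ι : Type*} [NormedAddCommGroup E] [InnerProductSpace ℝ E]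
  {a : ι → E} {t : ℝ}

theorem eq_zero_of_mem_span_of_forall_inner_eq_zero {v : E}
    (hv : v ∈ Submodule.span ℝ (Set.range a)) (h : ∀ i, ⟪a i, v⟫ = 0) : v = 0 := by
  have hle : Submodule.span ℝ (Set.range a) ≤ (ℝ ∙ v)ᗮ :=
    Submodule.span_le.2 <| Set.range_subset_iff.2 fun i =>
      Submodule.mem_orthogonal_singleton_iff_inner_left.2 (h i)
  exact inner_self_eq_zero.1 (Submodule.mem_orthogonal_singleton_iff_inner_left.1 (hle hv))

theorem inner_sum_of_notMem (hreg : ∀ i j, i ≠ j → ⟪a i, a j⟫ = t) {s : Finset ι} {j : ι}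
    (hj : j ∉ s) : ⟪a j, ∑ i ∈ s, a i⟫ = #s * t := by
  rw [inner_sum, sum_congr rfl fun i hi => hreg j i (ne_of_mem_of_not_mem hi hj).symm,
    sum_const, nsmul_eq_mul]

variable [DecidableEq ι]

theorem inner_sum_of_mem (ha : ∀ i, ‖a i‖ = 1) (hreg : ∀ i j, i ≠ j → ⟪a i, a j⟫ = t)
    {s : Finset ι} {j : ι} (hj : j ∈ s) : ⟪a j, ∑ i ∈ s, a i⟫ = 1 + (#s - 1) * t := by
  rw [← add_sum_erase s a hj, inner_add_right, real_inner_self_eq_norm_sq, ha,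
    inner_sum_of_notMem hreg (notMem_erase j s), card_erase_of_mem hj,
    Nat.cast_sub (card_pos.2 ⟨j, hj⟩), Nat.cast_one, one_pow]

theorem norm_sq_sum_of_regular (ha : ∀ i, ‖a i‖ = 1) (hreg : ∀ i j, i ≠ j → ⟪a i, a j⟫ = t)
    (s : Finset ι) : ‖∑ i ∈ s, a i‖ ^ 2 = #s * (1 + (#s - 1) * t) := by
  rw [← real_inner_self_eq_norm_sq, sum_inner,
    sum_congr rfl fun j hj => inner_sum_of_mem ha hreg hj, sum_const, nsmul_eq_mul]

variable [Fintype ι]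

theorem one_add_mul_eq_card_mul_sq_of_circumcenter (ha : ∀ i, ‖a i‖ = 1)
    (hreg : ∀ i j, i ≠ j → ⟪a i, a j⟫ = t) {C : E} {c : ℝ} (hC1 : ‖C‖ = 1)
    (hCspan : C ∈ Submodule.span ℝ (Set.range a)) (hCR : ∀ i, ⟪a i, C⟫ = c) :
    1 + (Fintype.card ι - 1) * t = Fintype.card ι * c ^ 2 := by
  set m := 1 + ((Fintype.card ι : ℝ) - 1) * t
  have hm : ∀ j, ⟪a j, ∑ i, a i⟫ = m := fun j => by
    rw [inner_sum_of_mem ha hreg (mem_univ j), card_univ]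
  have hsum_mem : ∑ i, a i ∈ Submodule.span ℝ (Set.range a) :=
    Submodule.sum_mem _ fun i _ => Submodule.subset_span (Set.mem_range_self i)
  have hv : c • ∑ i, a i - m • C = 0 := by
    refine eq_zero_of_mem_span_of_forall_inner_eq_zero
      (Submodule.sub_mem _ (Submodule.smul_mem _ _ hsum_mem) (Submodule.smul_mem _ _ hCspan))
      fun j => ?_
    rw [inner_sub_right, real_inner_smul_right, real_inner_smul_right, hm, hCR]
    ring
  have hCsum : ⟪C, ∑ i, a i⟫ = Fintype.card ι * c := by
    rw [inner_sum, sum_congr rfl fun i _ => (real_inner_comm C (a i)).symm.trans (hCR i),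
      sum_const, card_univ, nsmul_eq_mul]
  have hCv := congrArg (⟪C, ·⟫) hv
  simp only [inner_sub_right, real_inner_smul_right, hCsum, real_inner_self_eq_norm_sq, hC1,
    inner_zero_right] at hCv
  linear_combination -hCv

end RegularFamily

theorem stmt10_general {d : ℕ} (a : Fin (d + 1) → EuclideanSpace ℝ (Fin (d + 1)))
    (t : ℝ) (ha : ∀ i, ‖a i‖ = 1) (hreg : ∀ i j, i ≠ j → ⟪a i, a j⟫ = t)
    (C : EuclideanSpace ℝ (Fin (d + 1))) (R' : ℝ)
    (hC1 : ‖C‖ = 1) (hCspan : C ∈ Submodule.span ℝ (Set.range a))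
    (hCR : ∀ i, ⟪a i, C⟫ = Real.cos R') :
    ⟪a 0, ‖∑ i ∈ Finset.univ.erase 0, a i‖⁻¹ • ∑ i ∈ Finset.univ.erase 0, a i⟫ =
      ((d + 1) * Real.cos R' ^ 2 - 1) /
        Real.sqrt (1 + ((d : ℝ) - 1) * ((d : ℝ) + 1) * Real.cos R' ^ 2) := by
  have hcirc := one_add_mul_eq_card_mul_sq_of_circumcenter ha hreg hC1 hCspan hCR
  have hcard : #(univ.erase (0 : Fin (d + 1))) = d := by simp
  have hinner := inner_sum_of_notMem hreg (notMem_erase (0 : Fin (d + 1)) univ)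
  have hnorm := norm_sq_sum_of_regular ha hreg (univ.erase 0)
  rw [hcard] at hinner hnorm
  simp only [Fintype.card_fin, Nat.cast_add, Nat.cast_one, add_sub_cancel_right] at hcirc
  rw [real_inner_smul_right, hinner, ← Real.sqrt_sq (norm_nonneg _), hnorm, inv_mul_eq_div]
  congr 1
  · linear_combination hcirc
  · congr 1
    linear_combination ((d : ℝ) - 1) * hcirc

/-- Lemma 3.3, Santaló: for a regular spherical `d`-simplex
`Q = co{a 0, ..., a d} ⊂ S^d` with circumradius `R'` (circumcenter `C`, a unit vector in
the span of the vertices with `⟪a i, C⟫ = cos R' > 0`), the vertex diameter `D_v`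
— the angle between a vertex and the normalized centroid of the opposite facet —
satisfies `cos D_v = ((d+1) cos² R' - 1)/√(1 + (d-1)(d+1) cos² R')`. -/
theorem stmt10 {d : ℕ} (hd : 1 ≤ d) (a : Fin (d + 1) → EuclideanSpace ℝ (Fin (d + 1)))
    (t : ℝ) (ha : ∀ i, ‖a i‖ = 1) (hreg : ∀ i j, i ≠ j → ⟪a i, a j⟫ = t)
    (hind : LinearIndependent ℝ a)
    (C : EuclideanSpace ℝ (Fin (d + 1))) (R' : ℝ)
    (hC1 : ‖C‖ = 1) (hCspan : C ∈ Submodule.span ℝ (Set.range a))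
    (hCR : ∀ i, ⟪a i, C⟫ = Real.cos R') (hcos : 0 < Real.cos R') :
    ⟪a 0, ‖∑ i ∈ Finset.univ.erase 0, a i‖⁻¹ • ∑ i ∈ Finset.univ.erase 0, a i⟫ =
      ((d + 1) * Real.cos R' ^ 2 - 1) /
        Real.sqrt (1 + ((d : ℝ) - 1) * ((d : ℝ) + 1) * Real.cos R' ^ 2) :=
  stmt10_general a t ha hreg C R' hC1 hCspan hCR
end

section
/- Let Φ: B^d → R^{d+1}, Φ(x) = (x_1, ..., x_d, sqrt(1 - Σ x_i^2)), be the parametrization of the upper hemisphere, and for α > 0 let Ψ_α(x_1, ..., x_{d+1}) = (α x_1, x_2, ..., x_{d+1}) / sqrt(1 + (α^2 - 1) x_1^2) restricted to S^d. At the point x̄ = (β, 0, ..., 0, sqrt(1-β^2)) with 0 ≤ β < 1, the Jacobian volume elements satisfy det Φ(x̄) = 1/sqrt(1-β^2) and det(Ψ_α ∘ Φ)(x̄) = α / (sqrt(1-β^2) (1 + β^2(α^2-1))^{(d+1)/2}). Hence the local volume distortion of Ψ_α at any point of S^d with first coordinate β equals α / (1 + β^2(α^2-1))^{(d+1)/2}.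 -/
/-!
At `x̄ = β e₁` the partial derivatives of `Φ` and of `Ψ_α ∘ Φ` are pairwise orthogonal: the first
lies in the plane spanned by `e₁` and `e_{d+1}`, the `j`-th (`j ≥ 2`) is a multiple of `e_j`. Hence
the Gram matrix is diagonal and `det` is the product of their lengths. For `Φ` these lengths are
`1 / √(1 - β²)` and `1`. By the chain rule, with `q = 1 + (α² - 1) β²`, the partial derivatives of
`Ψ_α ∘ Φ` have lengths `α / (√(1 - β²) q)` and `q^{-1/2}`, whose product is the stated formula.
-/

open RealInnerProductSpace
open scoped BigOperators

noncomputable section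

/-- The Jacobian volume element `det Φ` of a parametrized `d`-surface
`Φ : ℝ^d → ℝ^{d+1}` at `x`: the square root of the Gram determinant of the partial
derivatives `∂Φ/∂x_i`. -/
def jacDet {d : ℕ} (f : EuclideanSpace ℝ (Fin d) → EuclideanSpace ℝ (Fin (d + 1)))
    (x : EuclideanSpace ℝ (Fin d)) : ℝ :=
  Real.sqrt
    (Matrix.det (Matrix.of fun i j : Fin d =>
      ⟪fderiv ℝ f x (EuclideanSpace.single i 1), fderiv ℝ f x (EuclideanSpace.single j 1)⟫))

section jacDet

variable {d : ℕ} (f : EuclideanSpace ℝ (Fin d) → EuclideanSpace ℝ (Fin (d + 1)))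
  (x : EuclideanSpace ℝ (Fin d))

theorem jacDet_eq_prod_norm_of_pairwise_orthogonal
    (h : Pairwise fun i j : Fin d =>
      ⟪fderiv ℝ f x (EuclideanSpace.single i 1), fderiv ℝ f x (EuclideanSpace.single j 1)⟫ = 0) :
    jacDet f x = ∏ i, ‖fderiv ℝ f x (EuclideanSpace.single i 1)‖ := by
  have hgram : (Matrix.of fun i j : Fin d =>
      ⟪fderiv ℝ f x (EuclideanSpace.single i 1), fderiv ℝ f x (EuclideanSpace.single j 1)⟫) =
      Matrix.diagonal fun i => ‖fderiv ℝ f x (EuclideanSpace.single i 1)‖ ^ 2 := by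
    ext i j
    rcases eq_or_ne i j with rfl | hij
    · simp
    · simp [h hij, hij]
  rw [jacDet, hgram, Matrix.det_diagonal, Finset.prod_pow,
    Real.sqrt_sq (Finset.prod_nonneg fun i _ => norm_nonneg _)]

theorem jacDet_eq_of_fderiv_single (i₀ : Fin d) (a b c : ℝ)
    (h₀ : fderiv ℝ f x (EuclideanSpace.single i₀ 1) =
      a • EuclideanSpace.single i₀.castSucc 1 + b • EuclideanSpace.single (Fin.last d) 1)
    (hj : ∀ j ≠ i₀, fderiv ℝ f x (EuclideanSpace.single j 1) =
      c • EuclideanSpace.single j.castSucc 1) :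
    jacDet f x = √(a ^ 2 + b ^ 2) * |c| ^ (d - 1) := by
  have hlast : ∀ j : Fin d, Fin.last d ≠ j.castSucc := fun j => (Fin.castSucc_ne_last j).symm
  rw [jacDet_eq_prod_norm_of_pairwise_orthogonal]
  · rw [← Finset.mul_prod_erase _ _ (Finset.mem_univ i₀),
      Finset.prod_congr rfl fun j hj' => by rw [hj j (Finset.ne_of_mem_erase hj')], h₀]
    simp [EuclideanSpace.norm_eq, Fin.sum_univ_castSucc, hlast, Real.sqrt_sq_eq_abs]
  · intro i j hij
    rcases eq_or_ne i i₀ with rfl | hi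
    · rw [h₀, hj j hij.symm]
      simp [inner_add_left, inner_smul_left, inner_smul_right, EuclideanSpace.inner_single_left,
        hij.symm]
    rcases eq_or_ne j i₀ with rfl | hj'
    · rw [h₀, hj i hij]
      simp [inner_add_right, inner_smul_left, inner_smul_right, EuclideanSpace.inner_single_left,
        hij]
    · rw [hj i hi, hj j hj']
      simp [inner_smul_left, inner_smul_right, EuclideanSpace.inner_single_left, hij]

end jacDet

theorem fderiv_piLp_apply {ι E : Type*} [Fintype ι] [NormedAddCommGroup E] [NormedSpace ℝ E]
    {f : E → EuclideanSpace ℝ ι} {x : E} (hf : DifferentiableAt ℝ f x) (v : E) (k : ι) :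
    fderiv ℝ f x v k = fderiv ℝ (fun y => f y k) x v :=
  (DFunLike.congr_fun
    ((PiLp.hasFDerivAt_apply (𝕜 := ℝ) 2 (f x) k).comp x hf.hasFDerivAt).fderiv v).symm

theorem hasFDerivAt_sqrt_one_sub_norm_sq {F : Type*} [NormedAddCommGroup F]
    [InnerProductSpace ℝ F] {x : F} (hx : ‖x‖ < 1) :
    HasFDerivAt (fun y : F => √(1 - ‖y‖ ^ 2)) (-(√(1 - ‖x‖ ^ 2))⁻¹ • innerSL ℝ x) x := by
  have hx' : 0 < 1 - ‖x‖ ^ 2 := by nlinarith [norm_nonneg x]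
  convert ((hasStrictFDerivAt_norm_sq x).hasFDerivAt.const_sub 1).sqrt hx'.ne' using 1
  ext v
  simp only [neg_smul, neg_apply, smul_apply, coe_innerSL_apply, smul_eq_mul, one_div,
    mul_inv_rev, smul_neg, nsmul_eq_mul, Nat.cast_ofNat, neg_inj]
  ring

theorem hasDerivAt_inv_sqrt_one_add_mul_sq {κ t : ℝ} (ht : 0 < 1 + κ * t ^ 2) :
    HasDerivAt (fun s : ℝ => (√(1 + κ * s ^ 2))⁻¹) (-(κ * t) / √(1 + κ * t ^ 2) ^ 3) t := by
  have hsqrt := (((hasDerivAt_pow 2 t).const_mul κ).const_add 1).sqrt ht.ne'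
  refine (hsqrt.inv (Real.sqrt_pos.2 ht).ne').congr_deriv ?_
  field_simp
  norm_num

theorem norm_single_lt_one {ι : Type*} [Fintype ι] [DecidableEq ι] {i : ι} {β : ℝ}
    (hβ : β ^ 2 < 1) : ‖EuclideanSpace.single i β‖ < 1 := by
  rw [PiLp.norm_single, Real.norm_eq_abs]
  exact (sq_lt_one_iff_abs_lt_one β).1 hβ

def hemisphereChart (d : ℕ) : EuclideanSpace ℝ (Fin d) → EuclideanSpace ℝ (Fin (d + 1)) :=
  fun x => WithLp.toLp 2 (Fin.snoc x (Real.sqrt (1 - ∑ i, x i ^ 2)) : Fin (d + 1) → ℝ)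

section hemisphereChart

variable {d : ℕ}

@[simp]
theorem hemisphereChart_apply_castSucc (x : EuclideanSpace ℝ (Fin d)) (j : Fin d) :
    hemisphereChart d x j.castSucc = x j := by
  simp [hemisphereChart]

@[simp]
theorem hemisphereChart_apply_last (x : EuclideanSpace ℝ (Fin d)) :
    hemisphereChart d x (Fin.last d) = √(1 - ‖x‖ ^ 2) := by
  simp [hemisphereChart, EuclideanSpace.real_norm_sq_eq]

theorem hemisphereChart_single (i : Fin d) (β : ℝ) :
    hemisphereChart d (EuclideanSpace.single i β) =
      β • EuclideanSpace.single i.castSucc 1 +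
        √(1 - β ^ 2) • EuclideanSpace.single (Fin.last d) 1 := by
  ext k
  induction k using Fin.lastCases with
  | last => simp
  | cast m => by_cases hm : m = i <;> simp [hm]

theorem differentiableAt_hemisphereChart {x : EuclideanSpace ℝ (Fin d)} (hx : ‖x‖ < 1) :
    DifferentiableAt ℝ (hemisphereChart d) x := by
  refine (differentiableAt_piLp 2).2 fun k => Fin.lastCases ?_ (fun j => ?_) k
  · simpa using (hasFDerivAt_sqrt_one_sub_norm_sq hx).differentiableAt
  · simpa using (PiLp.hasFDerivAt_apply 2 x j).differentiableAt

theorem fderiv_hemisphereChart_apply_single {x : EuclideanSpace ℝ (Fin d)} (hx : ‖x‖ < 1)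
    (j : Fin d) :
    fderiv ℝ (hemisphereChart d) x (EuclideanSpace.single j 1) =
      EuclideanSpace.single j.castSucc 1 +
        (-x j / √(1 - ‖x‖ ^ 2)) • EuclideanSpace.single (Fin.last d) 1 := by
  ext k
  rw [fderiv_piLp_apply (differentiableAt_hemisphereChart hx)]
  induction k using Fin.lastCases with
  | last =>
    simp only [hemisphereChart_apply_last, (hasFDerivAt_sqrt_one_sub_norm_sq hx).fderiv]
    simp [EuclideanSpace.inner_single_right, div_eq_inv_mul]
  | cast m =>
    simp only [hemisphereChart_apply_castSucc, (PiLp.hasFDerivAt_apply 2 x m).fderiv]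
    simp

theorem fderiv_hemisphereChart_single_apply_single {β : ℝ} (hβ : β ^ 2 < 1) (i j : Fin d) :
    fderiv ℝ (hemisphereChart d) (EuclideanSpace.single i β) (EuclideanSpace.single j 1) =
      EuclideanSpace.single j.castSucc 1 +
        (if j = i then -β / √(1 - β ^ 2) else 0) • EuclideanSpace.single (Fin.last d) 1 := by
  rw [fderiv_hemisphereChart_apply_single (norm_single_lt_one hβ)]
  by_cases hj : j = i <;> simp [hj]

theorem jacDet_hemisphereChart_single {β : ℝ} (hβ : β ^ 2 < 1) (i : Fin d) :
    jacDet (hemisphereChart d) (EuclideanSpace.single i β) = 1 / √(1 - β ^ 2) := by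
  rw [jacDet_eq_of_fderiv_single _ _ i 1 (-β / √(1 - β ^ 2)) 1
    (by rw [fderiv_hemisphereChart_single_apply_single hβ, if_pos rfl, one_smul])
    (fun j hj => by rw [fderiv_hemisphereChart_single_apply_single hβ, if_neg hj]; simp)]
  have hs : 0 < 1 - β ^ 2 := by linarith
  have hsum : 1 + (-β / √(1 - β ^ 2)) ^ 2 = (1 - β ^ 2)⁻¹ := by
    rw [div_pow, Real.sq_sqrt hs.le]
    field_simp
    ring
  simp only [abs_one, one_pow, mul_one]
  rw [hsum, Real.sqrt_inv, one_div]

end hemisphereChart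

def sphereRescale {n : ℕ} [NeZero n] (α : ℝ) (y : EuclideanSpace ℝ (Fin n)) :
    EuclideanSpace ℝ (Fin n) :=
  (Real.sqrt (1 + (α ^ 2 - 1) * (y 0) ^ 2))⁻¹ •
    (WithLp.toLp 2 (fun i => if i = 0 then α * y 0 else y i : Fin n → ℝ) :
      EuclideanSpace ℝ (Fin n))

section sphereRescale

variable {n : ℕ} [NeZero n] (α : ℝ)

local notation "e₀" => EuclideanSpace.single (0 : Fin n) (1 : ℝ)

theorem sphereRescale_eq_smul (y : EuclideanSpace ℝ (Fin n)) :
    sphereRescale α y = (√(1 + (α ^ 2 - 1) * y 0 ^ 2))⁻¹ • (y + ((α - 1) * y 0) • e₀) := by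
  ext i
  by_cases hi : i = 0
  · subst hi
    simp only [sphereRescale, PiLp.smul_apply, ↓reduceIte, smul_eq_mul, smul_add, PiLp.add_apply,
      PiLp.single_eq_same, mul_one]
    ring
  · simp [sphereRescale, hi]

theorem hasFDerivAt_sphereRescale {y : EuclideanSpace ℝ (Fin n)}
    (hy : 0 < 1 + (α ^ 2 - 1) * y 0 ^ 2) :
    HasFDerivAt (sphereRescale α)
      ((√(1 + (α ^ 2 - 1) * y 0 ^ 2))⁻¹ •
          (ContinuousLinearMap.id ℝ (EuclideanSpace ℝ (Fin n)) +
            ((α - 1) • EuclideanSpace.proj 0).smulRight e₀) +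
        ((-((α ^ 2 - 1) * y 0) / √(1 + (α ^ 2 - 1) * y 0 ^ 2) ^ 3) •
          EuclideanSpace.proj (0 : Fin n)).smulRight (y + ((α - 1) * y 0) • e₀)) y := by
  have hscale := (hasDerivAt_inv_sqrt_one_add_mul_sq hy).comp_hasFDerivAt y
    (PiLp.hasFDerivAt_apply (𝕜 := ℝ) 2 y 0)
  have hlin := (hasFDerivAt_id y).add
    (((PiLp.hasFDerivAt_apply (𝕜 := ℝ) 2 y 0).const_mul (α - 1)).smul_const e₀)
  rw [show sphereRescale α = _ from funext (sphereRescale_eq_smul α)]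
  exact hscale.smul hlin

theorem fderiv_sphereRescale_apply {y : EuclideanSpace ℝ (Fin n)}
    (hy : 0 < 1 + (α ^ 2 - 1) * y 0 ^ 2) (v : EuclideanSpace ℝ (Fin n)) :
    fderiv ℝ (sphereRescale α) y v =
      (√(1 + (α ^ 2 - 1) * y 0 ^ 2))⁻¹ • (v + ((α - 1) * v 0) • e₀) +
        (-((α ^ 2 - 1) * y 0) / √(1 + (α ^ 2 - 1) * y 0 ^ 2) ^ 3 * v 0) •
          (y + ((α - 1) * y 0) • e₀) := by
  rw [(hasFDerivAt_sphereRescale α hy).fderiv]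
  simp [mul_smul]

end sphereRescale

theorem one_add_sq_sub_one_mul_sq_pos (α : ℝ) {β : ℝ} (hβ : β ^ 2 < 1) :
    0 < 1 + (α ^ 2 - 1) * β ^ 2 := by
  nlinarith [sq_nonneg (α * β)]

section rescaledHemisphereChart

variable {d : ℕ} [NeZero d] (α : ℝ) {β : ℝ}

theorem fderiv_sphereRescale_comp_hemisphereChart (hβ : β ^ 2 < 1)
    (v : EuclideanSpace ℝ (Fin d)) :
    fderiv ℝ (sphereRescale α ∘ hemisphereChart d) (EuclideanSpace.single 0 β) v =
      fderiv ℝ (sphereRescale α)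
        (β • EuclideanSpace.single 0 1 + √(1 - β ^ 2) • EuclideanSpace.single (Fin.last d) 1)
        (fderiv ℝ (hemisphereChart d) (EuclideanSpace.single 0 β) v) := by
  have hy := hemisphereChart_single (0 : Fin d) β
  rw [Fin.castSucc_zero] at hy
  have hq : 0 < 1 + (α ^ 2 - 1) * hemisphereChart d (EuclideanSpace.single 0 β) 0 ^ 2 := by
    rw [← Fin.castSucc_zero, hemisphereChart_apply_castSucc, PiLp.single_eq_same]
    exact one_add_sq_sub_one_mul_sq_pos α hβ
  rw [fderiv_comp _ (hasFDerivAt_sphereRescale α hq).differentiableAt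
    (differentiableAt_hemisphereChart (norm_single_lt_one hβ)), ContinuousLinearMap.comp_apply, hy]

theorem fderiv_sphereRescale_comp_hemisphereChart_single_apply_single_zero (hβ : β ^ 2 < 1) :
    fderiv ℝ (sphereRescale α ∘ hemisphereChart d) (EuclideanSpace.single 0 β)
        (EuclideanSpace.single 0 1) =
      (α / √(1 + (α ^ 2 - 1) * β ^ 2) ^ 3) • EuclideanSpace.single 0 1 +
        (-(α ^ 2 * β) / (√(1 - β ^ 2) * √(1 + (α ^ 2 - 1) * β ^ 2) ^ 3)) •
          EuclideanSpace.single (Fin.last d) 1 := by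
  have hq := one_add_sq_sub_one_mul_sq_pos α hβ
  have hs : 0 < 1 - β ^ 2 := by linarith
  rw [fderiv_sphereRescale_comp_hemisphereChart α hβ,
    fderiv_hemisphereChart_single_apply_single hβ, if_pos rfl,
    fderiv_sphereRescale_apply α (by simpa [NeZero.ne d] using hq)]
  simp only [PiLp.add_apply, PiLp.smul_apply, PiLp.single_eq_same, smul_eq_mul, mul_one, ne_eq,
    Fin.zero_eq_last_iff, NeZero.ne d, not_false_eq_true, PiLp.single_eq_of_ne, mul_zero, add_zero,
    Fin.castSucc_zero, smul_add]
  have hr2 := Real.sq_sqrt hq.le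
  have hs2 := Real.sq_sqrt hs.le
  have hr0 := (Real.sqrt_pos.2 hq).ne'
  have hs0 := (Real.sqrt_pos.2 hs).ne'
  set r := √(1 + (α ^ 2 - 1) * β ^ 2)
  set s := √(1 - β ^ 2)
  match_scalars
  · field_simp
    linear_combination α * hr2
  · field_simp
    linear_combination (-β) * hr2 - β * (α ^ 2 - 1) * hs2

theorem fderiv_sphereRescale_comp_hemisphereChart_single_apply_single_of_ne_zero
    (hβ : β ^ 2 < 1) {j : Fin d} (hj : j ≠ 0) :
    fderiv ℝ (sphereRescale α ∘ hemisphereChart d) (EuclideanSpace.single 0 β)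
        (EuclideanSpace.single j 1) =
      (√(1 + (α ^ 2 - 1) * β ^ 2))⁻¹ • EuclideanSpace.single j.castSucc 1 := by
  have hq := one_add_sq_sub_one_mul_sq_pos α hβ
  rw [fderiv_sphereRescale_comp_hemisphereChart α hβ,
    fderiv_hemisphereChart_single_apply_single hβ, if_neg hj,
    fderiv_sphereRescale_apply α (by simpa [NeZero.ne d] using hq)]
  simp [hj, NeZero.ne d]

theorem jacDet_sphereRescale_comp_hemisphereChart_single (hα : 0 < α) (hβ : β ^ 2 < 1) :
    jacDet (sphereRescale α ∘ hemisphereChart d) (EuclideanSpace.single 0 β) =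
      α / (√(1 - β ^ 2) * (1 + β ^ 2 * (α ^ 2 - 1)) ^ (((d : ℝ) + 1) / 2)) := by
  rw [jacDet_eq_of_fderiv_single _ _ 0 _ _ _
    (by rw [fderiv_sphereRescale_comp_hemisphereChart_single_apply_single_zero α hβ,
      Fin.castSucc_zero])
    (fun j hj => fderiv_sphereRescale_comp_hemisphereChart_single_apply_single_of_ne_zero α hβ hj)]
  have hq := one_add_sq_sub_one_mul_sq_pos α hβ
  have hs : 0 < 1 - β ^ 2 := by linarith
  have hr2 := Real.sq_sqrt hq.le
  have hs2 := Real.sq_sqrt hs.le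
  have hr := Real.sqrt_pos.2 hq
  have hs' := Real.sqrt_pos.2 hs
  rw [show 1 + β ^ 2 * (α ^ 2 - 1) = 1 + (α ^ 2 - 1) * β ^ 2 by ring,
    Real.rpow_div_two_eq_sqrt _ hq.le, show (d : ℝ) + 1 = ((d + 1 : ℕ) : ℝ) by push_cast; rfl,
    Real.rpow_natCast]
  set r := √(1 + (α ^ 2 - 1) * β ^ 2)
  set s := √(1 - β ^ 2)
  -- `s² + α²β² = r²` collapses the length of the first partial derivative.
  have hsum : (α / r ^ 3) ^ 2 + (-(α ^ 2 * β) / (s * r ^ 3)) ^ 2 = (α / (s * r ^ 2)) ^ 2 := by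
    field_simp
    linear_combination hs2 - hr2
  rw [hsum, Real.sqrt_sq (by positivity), abs_inv, abs_of_pos hr, inv_pow,
    show d + 1 = 2 + (d - 1) by have := NeZero.ne d; omega, pow_add]
  field_simp

end rescaledHemisphereChart

/-- for the hemisphere parametrization
`Φ(x) = (x, √(1 - Σ xᵢ²))` and the rescaling
`Ψ_α(y) = (α y₁, y₂, ..., y_{d+1})/√(1 + (α² - 1) y₁²)`, at the point
`x̄ = (β, 0, ..., 0)` (so `Φ(x̄) = (β, 0, ..., 0, √(1-β²))`) one has
`det Φ(x̄) = 1/√(1-β²)` and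
`det (Ψ_α ∘ Φ)(x̄) = α/(√(1-β²) (1 + β²(α² - 1))^{(d+1)/2})`; hence the local volume
distortion of `Ψ_α` at a point of `S^d` with first coordinate `β` is
`α/(1 + β²(α²-1))^{(d+1)/2}`. -/
theorem stmt13 {d : ℕ} (hd : 0 < d) (α β : ℝ) (hα : 0 < α) (hβ0 : 0 ≤ β) (hβ1 : β < 1) :
    let Φ : EuclideanSpace ℝ (Fin d) → EuclideanSpace ℝ (Fin (d + 1)) :=
      fun x => WithLp.toLp 2 (Fin.snoc x (Real.sqrt (1 - ∑ i, x i ^ 2)) : Fin (d + 1) → ℝ)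
    let Ψ : EuclideanSpace ℝ (Fin (d + 1)) → EuclideanSpace ℝ (Fin (d + 1)) :=
      fun y => (Real.sqrt (1 + (α ^ 2 - 1) * (y 0) ^ 2))⁻¹ •
        (WithLp.toLp 2 (fun i => if i = 0 then α * y 0 else y i : Fin (d + 1) → ℝ) :
          EuclideanSpace ℝ (Fin (d + 1)))
    let xbar : EuclideanSpace ℝ (Fin d) := EuclideanSpace.single (⟨0, hd⟩ : Fin d) β
    jacDet Φ xbar = 1 / Real.sqrt (1 - β ^ 2) ∧
      jacDet (Ψ ∘ Φ) xbar =
        α / (Real.sqrt (1 - β ^ 2) * (1 + β ^ 2 * (α ^ 2 - 1)) ^ (((d : ℝ) + 1) / 2)) ∧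
      jacDet (Ψ ∘ Φ) xbar / jacDet Φ xbar =
        α / (1 + β ^ 2 * (α ^ 2 - 1)) ^ (((d : ℝ) + 1) / 2) := by
  intro Φ Ψ xbar
  have : NeZero d := ⟨hd.ne'⟩
  have hβ : β ^ 2 < 1 := by nlinarith
  have hΦ : jacDet Φ xbar = 1 / √(1 - β ^ 2) := jacDet_hemisphereChart_single hβ _
  have hΨΦ : jacDet (Ψ ∘ Φ) xbar =
      α / (√(1 - β ^ 2) * (1 + β ^ 2 * (α ^ 2 - 1)) ^ (((d : ℝ) + 1) / 2)) :=
    jacDet_sphereRescale_comp_hemisphereChart_single α hα hβ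
  refine ⟨hΦ, hΨΦ, ?_⟩
  have hs : 0 < √(1 - β ^ 2) := Real.sqrt_pos.2 (by linarith)
  rw [hΦ, hΨΦ]
  field_simp
end
end
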